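/- Let a = (a_1,…,a_n) be a real sequence that is U-shaped (nonincreasing then nondecreasing) and let r = (r_1,…,r_n) be nonincreasing. A permutation σ maximizing Σ_i r_i a_{σ(i)} must assign r_1 to an index achieving max_p a_p, which lies in {1, n}; i.e., in any optimal AttnRank assignment the most relevant document is placed at the first or last position. -/
import Mathlib


open Finset

lemma swap_sum_aux {n : ℕ} (f g : Fin n → ℝ) (x y : Fin n) (hxy : x ≠ y) :
    ∑ i, f i * g (Equiv.swap x y i) =
      ∑ i, f i * g i + (f x - f y) * (g y - g x) := by
  have h : ∑ i, (f i * g (Equiv.swap x y i) - f i * g i)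
      = (f x - f y) * (g y - g x) := by
    rw [← Finset.sum_subset (Finset.subset_univ ({x, y} : Finset (Fin n)))]
    · rw [Finset.sum_pair hxy]
      simp [Equiv.swap_apply_left, Equiv.swap_apply_right]
      ring
    · intro i _ hi
      simp only [Finset.mem_insert, Finset.mem_singleton, not_or] at hi
      rw [Equiv.swap_apply_of_ne_of_ne hi.1 hi.2]
      ring
  rw [Finset.sum_sub_distrib] at h
  linarith

/-- for a U-shaped attention sequence `a` (nonincreasing then
nondecreasing) and nonincreasing relevance `r` with `r` strictly larger at the
first index, any permutation `σ` maximizing `∑ i, r i * a (σ i)` places the most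
relevant document at a position achieving the maximum of `a`, and that maximal
value is attained at the first or last position. -/
theorem attnrank_optimal_places_top_at_ends (n : ℕ) (hn : 2 ≤ n)
    (a r : Fin n → ℝ) (m : Fin n)
    (hdec : ∀ i j : Fin n, i ≤ j → j ≤ m → a j ≤ a i)
    (hinc : ∀ i j : Fin n, m ≤ i → i ≤ j → a i ≤ a j)
    (hr : Antitone r)
    (hr1 : r ⟨1, by omega⟩ < r ⟨0, by omega⟩)
    (σ : Equiv.Perm (Fin n))
    (hopt : ∀ τ : Equiv.Perm (Fin n), ∑ i, r i * a (τ i) ≤ ∑ i, r i * a (σ i)) :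
    (∀ p : Fin n, a p ≤ a (σ ⟨0, by omega⟩)) ∧
    (a (σ ⟨0, by omega⟩) = a ⟨0, by omega⟩ ∨
      a (σ ⟨0, by omega⟩) = a ⟨n - 1, by omega⟩) := by
  set z : Fin n := ⟨0, by omega⟩ with hz
  have hmax : ∀ p : Fin n, a p ≤ a (σ z) := by
    intro p
    by_contra hcon
    push_neg at hcon
    set j : Fin n := σ.symm p with hj
    have hσj : σ j = p := σ.apply_symm_apply p
    have hjz : j ≠ z := by
      intro h
      rw [h] at hσj
      rw [hσj] at hcon
      exact lt_irrefl _ hcon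
    have h1j : (⟨1, by omega⟩ : Fin n) ≤ j := by
      have : j.val ≠ 0 := fun h => hjz (Fin.ext h)
      exact Fin.mk_le_of_le_val (by omega)
    have hrj : r j ≤ r ⟨1, by omega⟩ := hr h1j
    have hrz : r j < r z := lt_of_le_of_lt hrj hr1
    have hkey := hopt (σ * Equiv.swap z j)
    have heq : ∀ i, (σ * Equiv.swap z j) i = σ (Equiv.swap z j i) := fun i => rfl
    simp only [heq] at hkey
    have := swap_sum_aux r (fun i => a (σ i)) z j hjz.symm
    rw [this] at hkey
    rw [hσj] at hkey
    nlinarith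
  refine ⟨hmax, ?_⟩
  rcases le_total (σ z) m with h | h
  · left
    have h1 : a (σ z) ≤ a z := hdec z (σ z) (Fin.mk_le_of_le_val (by omega)) h
    exact le_antisymm h1 (hmax z)
  · right
    have hle : σ z ≤ (⟨n - 1, by omega⟩ : Fin n) := by
      have := (σ z).isLt
      exact Fin.le_def.mpr (by simp; omega)
    have h1 : a (σ z) ≤ a ⟨n - 1, by omega⟩ := hinc (σ z) _ h hle
    exact le_antisymm h1 (hmax _)
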